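/- arXiv:2302.09633 — 10 statements merged into one kernel-verified Lean document; each statement's English description precedes it below -/
import Mathlib

section
/- For every α with 0 < α ≤ 1 and every β > 1/(α+1), there exists an instance with additive valuations that admits no (even partial) allocation that is both α-EFX and β-MNW. Concretely, for n agents and 2n-1 items a_1,...,a_{n-1}, b_1,...,b_n with v_i(a_j) = 1/α + ε for all j, v_i(b_i) = 1, and v_i(b_j) = 0 for j ≠ i, every partial α-EFX allocation Z has Nash welfare at most (1/α + ε)^{(n-1)/n}, while the maximum Nash welfare is at least (1 + 1/α + ε)^{(n-1)/n}; the ratio tends to 1/(α+1) as ε → 0 and n → ∞. -/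
open Finset

/-- Impossibility for additive valuations: in the concrete instance with `n` agents,
`n-1` items `a_j` valued `1/α + ε` by everyone, and `n` items `b_j` where agent `i`
values `b_i` at `1` and `b_j` (`j ≠ i`) at `0`, every partial `α`-EFX allocation has
Nash welfare at most `(1/α + ε)^((n-1)/n)`, while the maximum Nash welfare is at least
`(1 + 1/α + ε)^((n-1)/n)`. -/
theorem stmt_0 (α ε : ℝ) (hα0 : 0 < α) (hα1 : α ≤ 1) (hε : 0 < ε)
    (n : ℕ) (hn : 2 ≤ n)
    (val : Fin n → (Fin (n - 1) ⊕ Fin n) → ℝ)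
    (hvala : ∀ i j, val i (Sum.inl j) = 1 / α + ε)
    (hvalb : ∀ i, val i (Sum.inr i) = 1)
    (hvalb' : ∀ i j, j ≠ i → val i (Sum.inr j) = 0)
    (v : Fin n → Finset (Fin (n - 1) ⊕ Fin n) → ℝ)
    (hv : ∀ i S, v i S = ∑ g ∈ S, val i g) :
    (∀ Z : Fin n → Finset (Fin (n - 1) ⊕ Fin n),
      (∀ i j, i ≠ j → Disjoint (Z i) (Z j)) →
      (∀ i j, ∀ g ∈ Z j, v i (Z i) ≥ α * v i ((Z j).erase g)) →
      (∏ i, v i (Z i)) ^ ((1 : ℝ) / (n : ℝ)) ≤ (1 / α + ε) ^ (((n : ℝ) - 1) / (n : ℝ)))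
    ∧ (∃ X : Fin n → Finset (Fin (n - 1) ⊕ Fin n),
      (∀ i j, i ≠ j → Disjoint (X i) (X j)) ∧
      (∏ i, v i (X i)) ^ ((1 : ℝ) / (n : ℝ)) ≥ (1 + 1 / α + ε) ^ (((n : ℝ) - 1) / (n : ℝ))) := by
  classical
  have hc1 : (1:ℝ) < 1/α + ε := by
    have h1 : (1:ℝ) ≤ 1/α := by
      rw [le_div_iff₀ hα0]; linarith
    linarith
  have hc0 : (0:ℝ) < 1/α + ε := by linarith
  have hnR : (0:ℝ) < (n:ℝ) := by positivity
  have hval_nonneg : ∀ i g, 0 ≤ val i g := by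
    intro i g
    cases g with
    | inl j => rw [hvala]; linarith
    | inr j =>
      by_cases h : j = i
      · subst h; rw [hvalb]; norm_num
      · rw [hvalb' i j h]
  have hv_nonneg : ∀ i S, 0 ≤ v i S := fun i S => by
    rw [hv]; exact Finset.sum_nonneg fun g _ => hval_nonneg i g
  have hcast : ((n-1:ℕ):ℝ) = (n:ℝ) - 1 := by
    have h1 : 1 ≤ n := by omega
    push_cast [Nat.cast_sub h1]; ring
  have hexp : ((n-1:ℕ):ℝ) * ((1:ℝ)/(n:ℝ)) = ((n:ℝ)-1)/(n:ℝ) := by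
    rw [hcast]; ring
  constructor
  · intro Z hdisj hefx
    have hprodnn : 0 ≤ ∏ i, v i (Z i) := Finset.prod_nonneg fun i _ => hv_nonneg _ _
    obtain ⟨i0, hi0⟩ : ∃ i0, ∀ j : Fin (n-1), Sum.inl j ∉ Z i0 := by
      by_contra h
      push_neg at h
      choose f hf using h
      have hinj : Function.Injective f := by
        intro a b hab
        by_contra hne
        exact Finset.disjoint_left.mp (hdisj a b hne) (hf a) (by rw [hab]; exact hf b)
      have := Fintype.card_le_of_injective f hinj
      simp [Fintype.card_fin] at this
      omega
    have hvi0 : v i0 (Z i0) = if Sum.inr i0 ∈ Z i0 then 1 else 0 := by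
      rw [hv]
      rw [show (∑ g ∈ Z i0, val i0 g)
          = ∑ g ∈ Z i0, (if g = Sum.inr i0 then (1:ℝ) else 0) from
        Finset.sum_congr rfl (by
          intro g hg
          cases g with
          | inl a => exact absurd hg (hi0 a)
          | inr k =>
            by_cases hk : k = i0
            · subst hk; rw [hvalb, if_pos rfl]
            · rw [hvalb' i0 k hk, if_neg (by simp [hk])])]
      rw [Finset.sum_ite_eq' (Z i0) (Sum.inr i0) (fun _ => (1:ℝ))]
    by_cases hb : Sum.inr i0 ∈ Z i0
    · -- v i0 (Z i0) = 1
      have hvi0' : v i0 (Z i0) = 1 := by rw [hvi0, if_pos hb]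
      have hkey : ∀ j, v j (Z j) ≤ 1/α + ε := by
        intro j
        by_cases ha : ∃ a : Fin (n-1), Sum.inl a ∈ Z j
        · obtain ⟨a, haj⟩ := ha
          have hsub : ∀ g ∈ Z j, g = Sum.inl a := by
            intro g hg
            by_contra hne
            have h1 := hefx i0 j g hg
            have hmem : Sum.inl a ∈ (Z j).erase g :=
              Finset.mem_erase.mpr ⟨fun h => hne h.symm, haj⟩
            have h2 : (1/α + ε) ≤ v i0 ((Z j).erase g) := by
              rw [hv]
              have h3 := Finset.single_le_sum (f := fun g => val i0 g)
                (fun g _ => hval_nonneg i0 g) hmem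
              simpa [hvala] using h3
            have h4 : α * (1/α + ε) ≤ v i0 (Z i0) := by
              refine le_trans ?_ h1
              exact mul_le_mul_of_nonneg_left h2 (le_of_lt hα0)
            rw [hvi0'] at h4
            have h5 : α * (1/α + ε) = 1 + α * ε := by
              field_simp
            nlinarith
          have hZj : Z j = {Sum.inl a} := by
            apply Finset.eq_singleton_iff_unique_mem.mpr
            exact ⟨haj, hsub⟩
          rw [hv, hZj, Finset.sum_singleton, hvala]
        · push_neg at ha
          have h1 : v j (Z j) ≤ 1 := by
            rw [hv]
            calc ∑ g ∈ Z j, val j g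
                = ∑ g ∈ Z j, (if g = Sum.inr j then (1:ℝ) else 0) := by
                  apply Finset.sum_congr rfl
                  intro g hg
                  cases g with
                  | inl a => exact absurd hg (ha a)
                  | inr k =>
                    by_cases hk : k = j
                    · subst hk; rw [hvalb, if_pos rfl]
                    · rw [hvalb' j k hk, if_neg (by simp [hk])]
              _ = if Sum.inr j ∈ Z j then 1 else 0 :=
                  Finset.sum_ite_eq' (Z j) (Sum.inr j) (fun _ => (1:ℝ))
              _ ≤ 1 := by split <;> norm_num
          linarith
      have hprodle : ∏ i, v i (Z i) ≤ (1/α + ε) ^ (n - 1) := by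
        rw [← Finset.mul_prod_erase univ _ (mem_univ i0), hvi0', one_mul]
        calc ∏ i ∈ univ.erase i0, v i (Z i)
            ≤ ∏ _i ∈ univ.erase i0, (1/α + ε) :=
              Finset.prod_le_prod (fun i _ => hv_nonneg _ _) (fun i _ => hkey i)
          _ = (1/α + ε) ^ (n - 1) := by
              rw [Finset.prod_const, Finset.card_erase_of_mem (mem_univ i0),
                Finset.card_univ, Fintype.card_fin]
      calc (∏ i, v i (Z i)) ^ ((1:ℝ)/(n:ℝ))
          ≤ ((1/α + ε) ^ (n - 1 : ℕ)) ^ ((1:ℝ)/(n:ℝ)) :=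
            Real.rpow_le_rpow hprodnn hprodle (by positivity)
        _ = (1/α + ε) ^ (((n:ℝ)-1)/(n:ℝ)) := by
            rw [← Real.rpow_natCast (1/α + ε) (n-1), ← Real.rpow_mul (le_of_lt hc0), hexp]
    · have hz : ∏ i, v i (Z i) = 0 :=
        Finset.prod_eq_zero (mem_univ i0) (by rw [hvi0, if_neg hb])
      rw [hz, Real.zero_rpow (by positivity)]
      positivity
  · -- existence
    set enn : Fin n := ⟨n - 1, by omega⟩ with henn
    refine ⟨fun i => if h : (i:ℕ) < n - 1
        then {Sum.inl ⟨i, h⟩, Sum.inr i} else {Sum.inr i}, ?_, ?_⟩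
    · intro i j hij
      rw [Finset.disjoint_left]
      intro g hg hg'
      apply hij
      have hmem : ∀ (k : Fin n), g ∈ (if h : (k:ℕ) < n - 1
          then ({Sum.inl ⟨k, h⟩, Sum.inr k} : Finset (Fin (n-1) ⊕ Fin n))
          else {Sum.inr k}) →
          (g = Sum.inr k ∨ ∃ h : (k:ℕ) < n - 1, g = Sum.inl ⟨k, h⟩) := by
        intro k hk
        by_cases h : (k:ℕ) < n - 1
        · rw [dif_pos h] at hk
          simp only [Finset.mem_insert, Finset.mem_singleton] at hk
          rcases hk with hk | hk
          · exact Or.inr ⟨h, hk⟩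
          · exact Or.inl hk
        · rw [dif_neg h] at hk
          simp only [Finset.mem_singleton] at hk
          exact Or.inl hk
      rcases hmem i hg with h1 | ⟨hi', h1⟩ <;> rcases hmem j hg' with h2 | ⟨hj', h2⟩
      · rw [h1] at h2; exact Sum.inr.inj h2
      · rw [h1] at h2; exact absurd h2 (by simp)
      · rw [h1] at h2; exact absurd h2 (by simp)
      · rw [h1] at h2
        exact Fin.ext (by simpa using h2)
    · have hvX : ∀ i : Fin n, v i (if h : (i:ℕ) < n - 1
          then ({Sum.inl ⟨i, h⟩, Sum.inr i} : Finset (Fin (n-1) ⊕ Fin n))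
          else {Sum.inr i})
          = if (i:ℕ) < n - 1 then (1/α + ε) + 1 else 1 := by
        intro i
        by_cases h : (i:ℕ) < n - 1
        · rw [dif_pos h, if_pos h, hv,
            Finset.sum_pair (by simp : (Sum.inl ⟨(i:ℕ), h⟩ : Fin (n-1) ⊕ Fin n) ≠ Sum.inr i),
            hvala, hvalb]
        · rw [dif_neg h, if_neg h, hv, Finset.sum_singleton, hvalb]
      have hprod : (∏ i, v i (if h : (i:ℕ) < n - 1
          then ({Sum.inl ⟨i, h⟩, Sum.inr i} : Finset (Fin (n-1) ⊕ Fin n))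
          else {Sum.inr i})) = ((1/α + ε) + 1) ^ (n - 1) := by
        rw [← Finset.mul_prod_erase univ _ (mem_univ enn)]
        have h1 : ¬ ((enn:ℕ) < n - 1) := by simp [henn]
        rw [hvX enn, if_neg h1, one_mul]
        calc ∏ i ∈ univ.erase enn, v i _
            = ∏ _i ∈ univ.erase enn, ((1/α + ε) + 1) := by
              apply Finset.prod_congr rfl
              intro i hi
              have hine : i ≠ enn := (Finset.mem_erase.mp hi).1
              have hilt : (i:ℕ) < n - 1 := by
                have := i.isLt
                have : (i:ℕ) ≠ n - 1 := fun hc => hine (Fin.ext (by simp [henn, hc]))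
                omega
              rw [hvX i, if_pos hilt]
          _ = ((1/α + ε) + 1) ^ (n - 1) := by
              rw [Finset.prod_const, Finset.card_erase_of_mem (mem_univ enn),
                Finset.card_univ, Fintype.card_fin]
      rw [hprod]
      apply ge_of_eq
      rw [← Real.rpow_natCast ((1/α + ε) + 1) (n-1), ← Real.rpow_mul (by positivity), hexp]
      congr 1
      ring
end

section
/- In the two-agent, five-identical-items instance where both agents have the same monotone valuation v with v(0)=0, v(1)=1, v(2)=1, v(3)=√N, v(4)=N, v(5)=N (value depends only on the number of items received), every partial allocation that is (2/√N)-EFX has Nash welfare at most √(√N), while the maximum Nash welfare is at least √N. Hence the MNW approximation ratio of any (2/√N)-EFX allocation is at most N^{-1/4}. -/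
open Finset

/-! The only split of at most five items whose product of values exceeds `√N` is the
`1`/`4` split, with product `N`. It is not `(2/√N)`-EFX: the agent holding one item (value `1`)
envies the other bundle even after an item is removed from it, since three items are worth
`√N` and `(2/√N) · √N = 2 > 1`. The complete `1`/`4` allocation witnesses the lower bound. -/

theorem Finset.card_add_card_le_card_of_disjoint {α : Type*} [Fintype α] {s t : Finset α}
    (h : Disjoint s t) : #s + #t ≤ Fintype.card α :=
  by classical exact card_union_of_disjoint h ▸ card_le_univ _

section FiveItems

variable {N : ℝ} {f : ℕ → ℝ}

lemma mul_le_sqrt_of_add_le_five (hN : 1 ≤ √N) (hf0 : f 0 = 0) (hf1 : f 1 = 1) (hf2 : f 2 = 1)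
    (hf3 : f 3 = √N) (hf4 : f 4 = N) (hf5 : f 5 = N) {a b : ℕ} (hab : a + b ≤ 5)
    (h14 : ¬(a = 1 ∧ b = 4)) (h41 : ¬(a = 4 ∧ b = 1)) : f a * f b ≤ √N := by
  have ha : a ≤ 5 := by omega
  have hb : b ≤ 5 := by omega
  interval_cases a <;> interval_cases b <;> simp_all

lemma exists_envy_of_card_one_of_card_four {α : Type*} [DecidableEq α] (hN : 0 < √N)
    (hf1 : f 1 = 1) (hf3 : f 3 = √N) {v : Finset α → ℝ} (hv : ∀ S, v S = f #S)
    {A B : Finset α} (hA : #A = 1) (hB : #B = 4) : ∃ g ∈ B, v A < 2 / √N * v (B.erase g) := by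
  obtain ⟨g, hg⟩ : B.Nonempty := card_pos.mp (by omega)
  refine ⟨g, hg, ?_⟩
  rw [hv, hv, hA, card_erase_of_mem hg, hB, hf1, hf3, div_mul_cancel₀ _ hN.ne']
  norm_num

end FiveItems

theorem stmt_1_general (N : ℝ) (hN : 1 < N)
    (f : ℕ → ℝ) (hf0 : f 0 = 0) (hf1 : f 1 = 1) (hf2 : f 2 = 1)
    (hf3 : f 3 = Real.sqrt N) (hf4 : f 4 = N) (hf5 : f 5 = N)
    (v : Finset (Fin 5) → ℝ) (hv : ∀ S, v S = f S.card) :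
    (∀ Z : Fin 2 → Finset (Fin 5),
      (∀ i j, i ≠ j → Disjoint (Z i) (Z j)) →
      (∀ i j, ∀ g ∈ Z j, v (Z i) ≥ (2 / Real.sqrt N) * v ((Z j).erase g)) →
      Real.sqrt (v (Z 0) * v (Z 1)) ≤ Real.sqrt (Real.sqrt N))
    ∧ (∃ X : Fin 2 → Finset (Fin 5),
      (∀ i j, i ≠ j → Disjoint (X i) (X j)) ∧ X 0 ∪ X 1 = Finset.univ ∧
      Real.sqrt (v (X 0) * v (X 1)) ≥ Real.sqrt N) := by
  have hsqrt : 1 < √N := Real.lt_sqrt_of_sq_lt (by linarith)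
  refine ⟨fun Z hdisj hefx => Real.sqrt_le_sqrt ?_, ⟨![{0}, {1, 2, 3, 4}], by decide, by decide, ?_⟩⟩
  · have hcard := card_add_card_le_card_of_disjoint (hdisj 0 1 (by decide))
    have not_one_four : ∀ i j, ¬(#(Z i) = 1 ∧ #(Z j) = 4) := fun i j ⟨hi, hj⟩ => by
      obtain ⟨g, hg, henvy⟩ :=
        exists_envy_of_card_one_of_card_four (by linarith) hf1 hf3 hv hi hj
      exact (hefx i j g hg).not_gt henvy
    rw [hv, hv]
    exact mul_le_sqrt_of_add_le_five hsqrt.le hf0 hf1 hf2 hf3 hf4 hf5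
      (by simpa using hcard) (not_one_four 0 1) (not_one_four 1 0 ∘ And.symm)
  · have hX0 : #({0} : Finset (Fin 5)) = 1 := rfl
    have hX1 : #({1, 2, 3, 4} : Finset (Fin 5)) = 4 := rfl
    simp [hv, hX0, hX1, hf1, hf4]

/-- Impossibility for general monotone valuations: two identical agents, five identical
items, with `v(S) = f(|S|)`, `f 0 = 0`, `f 1 = f 2 = 1`, `f 3 = √N`, `f 4 = f 5 = N`.
Every partial `(2/√N)`-EFX allocation has Nash welfare at most `√(√N)`, while the
maximum Nash welfare is at least `√N`. -/
theorem stmt_1 (N : ℝ) (hN : 1 < N)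
    (f : ℕ → ℝ) (hf0 : f 0 = 0) (hf1 : f 1 = 1) (hf2 : f 2 = 1)
    (hf3 : f 3 = Real.sqrt N) (hf4 : f 4 = N) (hf5 : f 5 = N)
    (hmono : Monotone f)
    (v : Finset (Fin 5) → ℝ) (hv : ∀ S, v S = f S.card) :
    (∀ Z : Fin 2 → Finset (Fin 5),
      (∀ i j, i ≠ j → Disjoint (Z i) (Z j)) →
      (∀ i j, ∀ g ∈ Z j, v (Z i) ≥ (2 / Real.sqrt N) * v ((Z j).erase g)) →
      Real.sqrt (v (Z 0) * v (Z 1)) ≤ Real.sqrt (Real.sqrt N))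
    ∧ (∃ X : Fin 2 → Finset (Fin 5),
      (∀ i j, i ≠ j → Disjoint (X i) (X j)) ∧ X 0 ∪ X 1 = Finset.univ ∧
      Real.sqrt (v (X 0) * v (X 1)) ≥ Real.sqrt N) :=
  stmt_1_general N hN f hf0 hf1 hf2 hf3 hf4 hf5 v hv
end

section
/- Let v be an additive valuation, let Z_i ⊆ X_i be bundles for agents i and j with i ≠ j, and define X̂_i = (X_i \ Z_i) ∪ (X_j \ Z_j). If v(X̂_i) ≤ α·v(X_i), then for every item x ∈ X_j \ Z_j, v(x) ≤ α·v(Z_i). -/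
open Finset

/-
Removing `Zi` from `Xi` and merging in `Xj \ Zj` splits `v(X̂i)` as `v(Xi \ Zi) + v(Xj \ Zj)`,
while `α·v(Xi) = α·v(Zi) + α·v(Xi \ Zi)`. Since `α ≤ 1`, the `Xi \ Zi` terms can only help,
so `v(Xj \ Zj) ≤ α·v(Zi)`, and every single item of `Xj \ Zj` is worth at most its whole.
-/

section AdditiveValuation

variable {ι : Type*} {v : Finset ι → ℝ}

theorem additive_valuation_nonneg (hadd : ∀ S : Finset ι, v S = ∑ g ∈ S, v {g})
    (hnn : ∀ g : ι, 0 ≤ v {g}) (S : Finset ι) : 0 ≤ v S :=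
  hadd S ▸ sum_nonneg fun g _ => hnn g

theorem additive_valuation_singleton_le (hadd : ∀ S : Finset ι, v S = ∑ g ∈ S, v {g})
    (hnn : ∀ g : ι, 0 ≤ v {g}) {S : Finset ι} {x : ι} (hx : x ∈ S) : v {x} ≤ v S :=
  hadd S ▸ single_le_sum (fun g _ => hnn g) hx

variable [DecidableEq ι]

theorem additive_valuation_union_of_disjoint (hadd : ∀ S : Finset ι, v S = ∑ g ∈ S, v {g})
    {S T : Finset ι} (h : Disjoint S T) : v (S ∪ T) = v S + v T := by
  rw [hadd, hadd S, hadd T, sum_union h]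

theorem additive_valuation_eq_add_sdiff (hadd : ∀ S : Finset ι, v S = ∑ g ∈ S, v {g})
    {Z X : Finset ι} (hZX : Z ⊆ X) : v X = v Z + v (X \ Z) := by
  rw [← additive_valuation_union_of_disjoint hadd disjoint_sdiff, union_sdiff_of_subset hZX]

end AdditiveValuation

theorem stmt_2_general {ι : Type*} [DecidableEq ι]
    (v : Finset ι → ℝ) (hadd : ∀ S : Finset ι, v S = ∑ g ∈ S, v {g})
    (hnn : ∀ g : ι, 0 ≤ v {g})
    (α : ℝ) (hα1 : α ≤ 1)
    (Xi Xj Zi Zj : Finset ι)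
    (hdisj : Disjoint Xi Xj) (hZi : Zi ⊆ Xi)
    (hhat : v ((Xi \ Zi) ∪ (Xj \ Zj)) ≤ α * v Xi) :
    ∀ x ∈ Xj \ Zj, v {x} ≤ α * v Zi := by
  intro x hx
  have hsplit : v ((Xi \ Zi) ∪ (Xj \ Zj)) = v (Xi \ Zi) + v (Xj \ Zj) :=
    additive_valuation_union_of_disjoint hadd (hdisj.mono sdiff_subset sdiff_subset)
  have hXi : v Xi = v Zi + v (Xi \ Zi) := additive_valuation_eq_add_sdiff hadd hZi
  have hrest : 0 ≤ (1 - α) * v (Xi \ Zi) :=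
    mul_nonneg (sub_nonneg.mpr hα1) (additive_valuation_nonneg hadd hnn _)
  calc v {x} ≤ v (Xj \ Zj) := additive_valuation_singleton_le hadd hnn hx
    _ = v ((Xi \ Zi) ∪ (Xj \ Zj)) - v (Xi \ Zi) := by rw [hsplit]; ring
    _ ≤ α * v Xi - v (Xi \ Zi) := by linarith
    _ = α * v Zi - (1 - α) * v (Xi \ Zi) := by rw [hXi]; ring
    _ ≤ α * v Zi := by linarith

/-- Lemma (trick): for an additive valuation `v`, disjoint bundles `Xi, Xj`,
sub-bundles `Zi ⊆ Xi`, `Zj ⊆ Xj`, if `v((Xi \ Zi) ∪ (Xj \ Zj)) ≤ α·v(Xi)`, then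
every item `x ∈ Xj \ Zj` satisfies `v({x}) ≤ α·v(Zi)`. -/
theorem stmt_2 {ι : Type*} [DecidableEq ι]
    (v : Finset ι → ℝ) (hadd : ∀ S : Finset ι, v S = ∑ g ∈ S, v {g})
    (hnn : ∀ g : ι, 0 ≤ v {g})
    (α : ℝ) (hα0 : 0 ≤ α) (hα1 : α ≤ 1)
    (Xi Xj Zi Zj : Finset ι)
    (hdisj : Disjoint Xi Xj) (hZi : Zi ⊆ Xi) (hZj : Zj ⊆ Xj)
    (hXpos : 0 < v Xi)
    (hhat : v ((Xi \ Zi) ∪ (Xj \ Zj)) ≤ α * v Xi) :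
    ∀ x ∈ Xj \ Zj, v {x} ≤ α * v Zi :=
  stmt_2_general v hadd hnn α hα1 Xi Xj Zi Zj hdisj hZi hhat
end

section
/- In the envy-cycles procedure with subadditive valuations, suppose the current partial allocation Y is min(α, 1/(1+γ))-EFX, agent i* is not envied by any agent (v_j(Y_{i*}) ≤ v_j(Y_j) for all j), and the item x to be allocated satisfies v_j({x}) ≤ γ·v_j(Y_j) for all agents j. Then the allocation obtained by replacing Y_{i*} with Y_{i*} ∪ {x} is still min(α, 1/(1+γ))-EFX. -/
/-!
Only the bundle of `istar` changes, and no agent's own bundle shrinks, so only envy towards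
`Y istar ∪ {x}` needs checking. Whatever item is removed from it, subadditivity bounds what is
left by `v i {x} + v i (Y istar) ≤ γ · v i (Y i) + v i (Y i)`, and the factor `1 / (1 + γ)`
absorbs this.
-/

open Finset

theorem nonneg_of_subadditive {β : Type*} [DecidableEq β] {v : Finset β → ℝ}
    (hsub : ∀ S T, v (S ∪ T) ≤ v S + v T) (S : Finset β) : 0 ≤ v S := by
  have := hsub S S
  rw [union_self] at this
  linarith

theorem erase_insert_le_singleton_add {β : Type*} [DecidableEq β] {v : Finset β → ℝ}
    (hmono : ∀ S T, S ⊆ T → v S ≤ v T) (hsub : ∀ S T, v (S ∪ T) ≤ v S + v T)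
    (x g : β) (B : Finset β) : v ((insert x B).erase g) ≤ v {x} + v B := by
  rw [insert_eq]
  exact (hmono _ _ (erase_subset _ _)).trans (hsub _ _)

theorem subset_update_insert {ι β : Type*} [DecidableEq ι] [DecidableEq β]
    (Y : ι → Finset β) (k : ι) (x : β) (i : ι) :
    Y i ⊆ Function.update Y k (insert x (Y k)) i := by
  rcases eq_or_ne i k with rfl | hi
  · simpa only [Function.update_self] using subset_insert x (Y i)
  · rw [Function.update_of_ne hi]

theorem min_one_div_one_add_mul_le {α γ w a : ℝ} (hγ : 0 ≤ γ) (hw : 0 ≤ w)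
    (h : w ≤ (1 + γ) * a) : min α (1 / (1 + γ)) * w ≤ a :=
  calc min α (1 / (1 + γ)) * w ≤ 1 / (1 + γ) * w := by gcongr; exact min_le_right _ _
    _ ≤ a := by rw [one_div_mul_eq_div, div_le_iff₀' (by linarith)]; exact h

theorem stmt_6_general (n m : ℕ) (α γ : ℝ) (hγ0 : 0 ≤ γ)
    (v : Fin n → Finset (Fin m) → ℝ)
    (hmono : ∀ i, ∀ S T : Finset (Fin m), S ⊆ T → v i S ≤ v i T)
    (hsub : ∀ i, ∀ S T : Finset (Fin m), v i (S ∪ T) ≤ v i S + v i T)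
    (Y : Fin n → Finset (Fin m))
    (x : Fin m)
    (istar : Fin n)
    (hunenvied : ∀ j, v j (Y istar) ≤ v j (Y j))
    (hxsmall : ∀ j, v j {x} ≤ γ * v j (Y j))
    (hefx : ∀ i j, ∀ g ∈ Y j, v i (Y i) ≥ min α (1 / (1 + γ)) * v i ((Y j).erase g)) :
    ∀ i j, ∀ g ∈ Function.update Y istar (insert x (Y istar)) j,
      v i (Function.update Y istar (insert x (Y istar)) i) ≥
        min α (1 / (1 + γ)) * v i ((Function.update Y istar (insert x (Y istar)) j).erase g) := by
  intro i j g hg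
  have hown : v i (Y i) ≤ v i (Function.update Y istar (insert x (Y istar)) i) :=
    hmono i _ _ (subset_update_insert Y istar x i)
  refine le_trans ?_ hown
  rcases eq_or_ne j istar with rfl | hj
  · rw [Function.update_self]
    refine min_one_div_one_add_mul_le hγ0 (nonneg_of_subadditive (hsub i) _) ?_
    calc v i ((insert x (Y j)).erase g) ≤ v i {x} + v i (Y j) :=
          erase_insert_le_singleton_add (hmono i) (hsub i) x g (Y j)
      _ ≤ γ * v i (Y i) + v i (Y i) := add_le_add (hxsmall i) (hunenvied i)
      _ = (1 + γ) * v i (Y i) := by ring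
  · rw [Function.update_of_ne hj] at hg ⊢
    exact hefx i j g hg

/-- Envy-cycles step (subadditive): if `Y` is `min(α, 1/(1+γ))`-EFX, agent `istar` is
unenvied, and the unallocated item `x` satisfies `v_j({x}) ≤ γ·v_j(Y_j)` for all `j`,
then adding `x` to `Y_istar` preserves `min(α, 1/(1+γ))`-EFX. -/
theorem stmt_6 (n m : ℕ) (α γ : ℝ) (hα0 : 0 ≤ α) (hα1 : α ≤ 1) (hγ0 : 0 ≤ γ) (hγ1 : γ ≤ 1)
    (v : Fin n → Finset (Fin m) → ℝ)
    (hmono : ∀ i, ∀ S T : Finset (Fin m), S ⊆ T → v i S ≤ v i T)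
    (hsub : ∀ i, ∀ S T : Finset (Fin m), v i (S ∪ T) ≤ v i S + v i T)
    (Y : Fin n → Finset (Fin m))
    (hdisj : ∀ i j, i ≠ j → Disjoint (Y i) (Y j))
    (x : Fin m) (hx : ∀ j, x ∉ Y j)
    (istar : Fin n)
    (hunenvied : ∀ j, v j (Y istar) ≤ v j (Y j))
    (hxsmall : ∀ j, v j {x} ≤ γ * v j (Y j))
    (hefx : ∀ i j, ∀ g ∈ Y j, v i (Y i) ≥ min α (1 / (1 + γ)) * v i ((Y j).erase g)) :
    ∀ i j, ∀ g ∈ Function.update Y istar (insert x (Y istar)) j,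
      v i (Function.update Y istar (insert x (Y istar)) i) ≥
        min α (1 / (1 + γ)) * v i ((Function.update Y istar (insert x (Y istar)) j).erase g) :=
  stmt_6_general n m α γ hγ0 v hmono hsub Y x istar hunenvied hxsmall hefx
end

section
/- In the envy-cycles procedure, if the current partial allocation Y is EF1, agent i* is not envied by any agent, and item x (unallocated) is added to Y_{i*}, then the resulting allocation is still EF1. -/
open Finset

def IsEF1 {ι α β : Type*} [DecidableEq α] [Preorder β] (v : ι → Finset α → β)
    (Y : ι → Finset α) : Prop :=
  ∀ i j, (Y j).Nonempty → ∃ g ∈ Y j, v i ((Y j).erase g) ≤ v i (Y i)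

section

variable {ι α β : Type*} [DecidableEq ι] [DecidableEq α] [Preorder β]

/-- Adding an item to one bundle enlarges no bundle, so EF1 for `Y` survives on every bundle
other than `Y k`; for `Y k` itself, removing the new item `x` leaves the old bundle, which no agent
envies. -/
theorem IsEF1.update_insert_of_unenvied {v : ι → Finset α → β} (hmono : ∀ i, Monotone (v i))
    {Y : ι → Finset α} (hY : IsEF1 v Y) {k : ι} (hunenvied : ∀ i, v i (Y k) ≤ v i (Y i))
    {x : α} (hx : x ∉ Y k) :
    IsEF1 v (Function.update Y k (insert x (Y k))) := by
  have hsub : Y ≤ Function.update Y k (insert x (Y k)) :=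
    le_update_self_iff.2 (subset_insert x (Y k))
  have hgain : ∀ i, v i (Y i) ≤ v i (Function.update Y k (insert x (Y k)) i) :=
    fun i => hmono i (hsub i)
  intro i j hj
  by_cases hjk : j = k
  · subst hjk
    refine ⟨x, by simp, ?_⟩
    rw [Function.update_self, erase_insert hx]
    exact (hunenvied i).trans (hgain i)
  · rw [Function.update_of_ne hjk] at hj ⊢
    obtain ⟨g, hg, hle⟩ := hY i j hj
    exact ⟨g, hg, hle.trans (hgain i)⟩

end

theorem stmt_7_general (n m : ℕ)
    (v : Fin n → Finset (Fin m) → ℝ)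
    (hmono : ∀ i, ∀ S T : Finset (Fin m), S ⊆ T → v i S ≤ v i T)
    (Y : Fin n → Finset (Fin m))
    (x : Fin m) (hx : ∀ j, x ∉ Y j)
    (istar : Fin n)
    (hunenvied : ∀ j, v j (Y istar) ≤ v j (Y j))
    (hef1 : ∀ i j, (Y j).Nonempty → ∃ g ∈ Y j, v i (Y i) ≥ v i ((Y j).erase g)) :
    ∀ i j, (Function.update Y istar (insert x (Y istar)) j).Nonempty →
      ∃ g ∈ Function.update Y istar (insert x (Y istar)) j,
        v i (Function.update Y istar (insert x (Y istar)) i) ≥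
          v i ((Function.update Y istar (insert x (Y istar)) j).erase g) :=
  IsEF1.update_insert_of_unenvied (v := v) (fun i _ _ => hmono i _ _) hef1 hunenvied (hx istar)

/-- Envy-cycles step (EF1): if `Y` is EF1, agent `istar` is unenvied, and the
unallocated item `x` is added to `Y_istar`, then the result is still EF1. -/
theorem stmt_7 (n m : ℕ)
    (v : Fin n → Finset (Fin m) → ℝ)
    (hmono : ∀ i, ∀ S T : Finset (Fin m), S ⊆ T → v i S ≤ v i T)
    (Y : Fin n → Finset (Fin m))
    (hdisj : ∀ i j, i ≠ j → Disjoint (Y i) (Y j))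
    (x : Fin m) (hx : ∀ j, x ∉ Y j)
    (istar : Fin n)
    (hunenvied : ∀ j, v j (Y istar) ≤ v j (Y j))
    (hef1 : ∀ i j, (Y j).Nonempty → ∃ g ∈ Y j, v i (Y i) ≥ v i ((Y j).erase g)) :
    ∀ i j, (Function.update Y istar (insert x (Y istar)) j).Nonempty →
      ∃ g ∈ Function.update Y istar (insert x (Y istar)) j,
        v i (Function.update Y istar (insert x (Y istar)) i) ≥
          v i ((Function.update Y istar (insert x (Y istar)) j).erase g) :=
  stmt_7_general n m v hmono Y x hx istar hunenvied hef1
end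

section
/- Let X be a Nash-welfare-maximizing allocation for additive valuations, and suppose bundles Z_i ⊆ X_i and a sequence of distinct agents j_1,...,j_ℓ satisfy v_{j_s}(Z_{j_{s-1}}) > v_{j_s}(Z_{j_s}) for all 2 ≤ s ≤ ℓ and v_{j_1}(Z_{j_ℓ}) > v_{j_1}(Z_{j_1}). Then this yields a contradiction: the allocation X̂ with X̂_{j_s} = (X_{j_s} \ Z_{j_s}) ∪ Z_{j_{s-1}} (indices cyclically, j_0 = j_ℓ) and X̂_i = X_i otherwise is a valid allocation with v_{j_s}(X̂_{j_s}) > v_{j_s}(X_{j_s}) for all s, contradicting maximality of Nash welfare. Hence no such cycle exists when X maximizes Nash welfare. -/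
open Finset

/-- No improving cycle at a Nash-welfare-maximizing allocation (additive valuations):
if `X` maximizes Nash welfare, `Z_i ⊆ X_i`, and distinct agents `j 0, ..., j ℓ` satisfy
cyclically `v_{j s}(Z_{j (s-1)}) > v_{j s}(Z_{j s})`, we get a contradiction (the cyclic
reallocation `X̂_{j s} = (X_{j s} \ Z_{j s}) ∪ Z_{j (s-1)}` would Pareto-improve `X`). -/
theorem stmt_10 (n m ℓ : ℕ)
    (v : Fin n → Finset (Fin m) → ℝ)
    (hadd : ∀ i, ∀ S : Finset (Fin m), v i S = ∑ g ∈ S, v i {g})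
    (hnn : ∀ i, ∀ g : Fin m, 0 ≤ v i {g})
    (X : Fin n → Finset (Fin m))
    (hdisj : ∀ i j, i ≠ j → Disjoint (X i) (X j))
    (hcomplete : Finset.univ.biUnion X = Finset.univ)
    (hpos : ∀ i, 0 < v i (X i))
    (hmax : ∀ Y : Fin n → Finset (Fin m), (∀ i j, i ≠ j → Disjoint (Y i) (Y j)) →
      (∏ i, v i (Y i)) ^ ((1 : ℝ) / (n : ℝ)) ≤ (∏ i, v i (X i)) ^ ((1 : ℝ) / (n : ℝ)))
    (Z : Fin n → Finset (Fin m)) (hZ : ∀ i, Z i ⊆ X i)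
    (j : Fin (ℓ + 1) → Fin n) (hjinj : Function.Injective j)
    (hcycle : ∀ s : Fin (ℓ + 1), v (j s) (Z (j (s - 1))) > v (j s) (Z (j s))) :
    False := by
  classical
  -- dispose of ℓ = 0
  rcases Nat.eq_zero_or_pos ℓ with hℓ0 | hℓ
  · subst hℓ0
    have h := hcycle 0
    have : (0 : Fin 1) - 1 = 0 := rfl
    rw [this] at h
    exact lt_irrefl _ h
  -- now ℓ ≥ 1 : s - 1 ≠ s
  have hsub1 : ∀ s : Fin (ℓ + 1), s - 1 ≠ s := by
    intro s hs
    have h1 : (1 : Fin (ℓ + 1)) = 0 := sub_eq_self.mp hs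
    have h2 : (1 : ℕ) % (ℓ + 1) = 0 := by
      have := congrArg Fin.val h1
      rwa [Fin.val_one', Fin.val_zero] at this
    rw [Nat.mod_eq_of_lt (by omega)] at h2
    exact one_ne_zero h2
  -- monotone / additive facts about v
  have hmono : ∀ i, ∀ A B : Finset (Fin m), A ⊆ B → v i A ≤ v i B := by
    intro i A B hAB
    rw [hadd i A, hadd i B]
    exact Finset.sum_le_sum_of_subset_of_nonneg hAB (fun g _ _ => hnn i g)
  have hunion : ∀ i, ∀ A B : Finset (Fin m), Disjoint A B → v i (A ∪ B) = v i A + v i B := by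
    intro i A B hAB
    rw [hadd i (A ∪ B), hadd i A, hadd i B, Finset.sum_union hAB]
  -- the new allocation
  set Y : Fin n → Finset (Fin m) := fun i =>
    if h : ∃ s, j s = i then (X i \ Z i) ∪ Z (j (Classical.choose h - 1)) else X i with hYdef
  have hYin : ∀ s : Fin (ℓ + 1), Y (j s) = (X (j s) \ Z (j s)) ∪ Z (j (s - 1)) := by
    intro s
    have hex : ∃ t, j t = j s := ⟨s, rfl⟩
    have hch : Classical.choose hex = s := hjinj (Classical.choose_spec hex)
    simp only [hYdef, dif_pos hex, hch]
  have hYout : ∀ i, (∀ s, j s ≠ i) → Y i = X i := by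
    intro i hi
    have hex : ¬ ∃ s, j s = i := by rintro ⟨s, hs⟩; exact hi s hs
    simp only [hYdef, dif_neg hex]
  -- disjointness pieces: subsets of distinct X's are disjoint
  have hkey : ∀ (p q : Fin n) (A B : Finset (Fin m)), A ⊆ X p → B ⊆ X q → p ≠ q →
      Disjoint A B := fun p q A B hA hB hpq => (hdisj p q hpq).mono hA hB
  have hYdisj : ∀ a b, a ≠ b → Disjoint (Y a) (Y b) := by
    intro a b hab
    by_cases ha : ∃ s, j s = a
    · obtain ⟨s, rfl⟩ := ha
      by_cases hb : ∃ t, j t = b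
      · obtain ⟨t, rfl⟩ := hb
        have hst : s ≠ t := fun h => hab (by rw [h])
        rw [hYin s, hYin t, Finset.disjoint_union_left, Finset.disjoint_union_right,
          Finset.disjoint_union_right]
        refine ⟨⟨hkey _ _ _ _ (Finset.sdiff_subset) (Finset.sdiff_subset) hab, ?_⟩,
          ⟨?_, ?_⟩⟩
        · -- X (j s) \ Z (j s) vs Z (j (t-1))
          by_cases h : t - 1 = s
          · rw [h]
            exact Finset.sdiff_disjoint
          · exact hkey _ _ _ _ Finset.sdiff_subset (hZ _) (fun he => h (hjinj he.symm))
        · -- Z (j (s-1)) vs X (j t) \ Z (j t)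
          by_cases h : s - 1 = t
          · rw [h]
            exact Finset.sdiff_disjoint.symm
          · exact hkey _ _ _ _ (hZ _) Finset.sdiff_subset (fun he => h (hjinj he))
        · -- Z (j (s-1)) vs Z (j (t-1))
          have : s - 1 ≠ t - 1 := fun h => hst (by
            have := sub_left_inj.mp h; exact this)
          exact hkey _ _ _ _ (hZ _) (hZ _) (fun he => this (hjinj he))
      · push_neg at hb
        rw [hYin s, hYout _ hb, Finset.disjoint_union_left]
        exact ⟨hkey _ _ _ _ Finset.sdiff_subset (le_refl _) hab,
          hkey _ _ _ _ (hZ _) (le_refl _) (hb _)⟩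
    · push_neg at ha
      rw [hYout _ ha]
      by_cases hb : ∃ t, j t = b
      · obtain ⟨t, rfl⟩ := hb
        rw [hYin t, Finset.disjoint_union_right]
        exact ⟨hkey _ _ _ _ (le_refl _) Finset.sdiff_subset hab,
          hkey _ _ _ _ (le_refl _) (hZ _) (Ne.symm (ha _))⟩
      · push_neg at hb
        rw [hYout _ hb]
        exact hdisj a b hab
  -- value improvement
  have hXsplit : ∀ i, v i (X i) = v i (X i \ Z i) + v i (Z i) := by
    intro i
    conv_lhs => rw [← Finset.sdiff_union_of_subset (hZ i)]
    exact hunion i _ _ Finset.sdiff_disjoint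
  have hvY : ∀ i, v i (X i) ≤ v i (Y i) := by
    intro i
    by_cases hi : ∃ s, j s = i
    · obtain ⟨s, rfl⟩ := hi
      rw [hYin s, hunion _ _ _ (hkey _ _ _ _ Finset.sdiff_subset (hZ _)
        (fun he => hsub1 s (hjinj he.symm))), hXsplit (j s)]
      exact add_le_add le_rfl (hcycle s).le
    · push_neg at hi
      rw [hYout _ hi]
  have hvY0 : v (j 0) (X (j 0)) < v (j 0) (Y (j 0)) := by
    rw [hYin 0, hunion _ _ _ (hkey _ _ _ _ Finset.sdiff_subset (hZ _)
      (fun he => hsub1 0 (hjinj he.symm))), hXsplit (j 0)]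
    exact add_lt_add_right (hcycle 0) _
  -- strict product inequality
  have hprod : (∏ i, v i (X i)) < (∏ i, v i (Y i)) :=
    Finset.prod_lt_prod (fun i _ => hpos i) (fun i _ => hvY i)
      ⟨j 0, Finset.mem_univ _, hvY0⟩
  have hn : (0 : ℝ) < 1 / (n : ℝ) := by
    have : 0 < n := (j 0).pos
    positivity
  have hlt := Real.rpow_lt_rpow (le_of_lt (Finset.prod_pos (fun i _ => hpos i))) hprod hn
  exact absurd (hmax Y hYdisj) (not_le.mpr hlt)
end

section
/- Let X be a Nash-welfare-maximizing allocation for additive valuations, and suppose bundles Z_i ⊆ X_i and a sequence of distinct agents j_1,...,j_ℓ (ℓ ≥ 2) satisfy: (a) v_{j_1}(Z_{j_1}) < (1/(α+1))·v_{j_1}(X_{j_1}); (b) v_{j_s}(Z_{j_{s-1}}) > v_{j_s}(Z_{j_s}) for 2 ≤ s ≤ ℓ-1; (c) Z_{j_ℓ} = X_{j_ℓ} and v_{j_ℓ}(Z_{j_{ℓ-1}}) > (1/α)·v_{j_ℓ}(Z_{j_ℓ}). Then the allocation X̂ defined by X̂_{j_1} = X_{j_1}\Z_{j_1}, X̂_{j_s}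 = (X_{j_s}\Z_{j_s}) ∪ Z_{j_{s-1}} for 2 ≤ s < ℓ, X̂_{j_ℓ} = X_{j_ℓ} ∪ Z_{j_{ℓ-1}}, X̂_i = X_i otherwise, satisfies NW(X̂) > NW(X), contradicting the maximality of X. Hence no such configuration exists. -/
open Finset

/-- No improving chain at a Nash-welfare-maximizing allocation (additive valuations):
if `X` maximizes Nash welfare, `Z_i ⊆ X_i`, and distinct agents `j 0, ..., j (ℓ-1)`
(with `ℓ ≥ 2`) satisfy (a) `v_{j 0}(Z_{j 0}) < v_{j 0}(X_{j 0})/(α+1)`;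
(b) `v_{j s}(Z_{j (s-1)}) > v_{j s}(Z_{j s})` for the middle indices `1 ≤ s ≤ ℓ-2`;
(c) `Z_{j (ℓ-1)} = X_{j (ℓ-1)}` and `v_{j (ℓ-1)}(Z_{j (ℓ-2)}) > (1/α)·v_{j (ℓ-1)}(Z_{j (ℓ-1)})`,
we get a contradiction (the chain reallocation would strictly increase Nash welfare). -/
theorem stmt_11 (n m ℓ : ℕ) (hℓ : 2 ≤ ℓ) (α : ℝ) (hα0 : 0 < α) (hα1 : α ≤ 1)
    (v : Fin n → Finset (Fin m) → ℝ)
    (hadd : ∀ i, ∀ S : Finset (Fin m), v i S = ∑ g ∈ S, v i {g})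
    (hnn : ∀ i, ∀ g : Fin m, 0 ≤ v i {g})
    (X : Fin n → Finset (Fin m))
    (hdisj : ∀ i j, i ≠ j → Disjoint (X i) (X j))
    (hcomplete : Finset.univ.biUnion X = Finset.univ)
    (hpos : ∀ i, 0 < v i (X i))
    (hmax : ∀ Y : Fin n → Finset (Fin m), (∀ i j, i ≠ j → Disjoint (Y i) (Y j)) →
      (∏ i, v i (Y i)) ^ ((1 : ℝ) / (n : ℝ)) ≤ (∏ i, v i (X i)) ^ ((1 : ℝ) / (n : ℝ)))
    (Z : Fin n → Finset (Fin m)) (hZ : ∀ i, Z i ⊆ X i)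
    (j : ℕ → Fin n) (hjinj : ∀ s < ℓ, ∀ t < ℓ, j s = j t → s = t)
    (ha : v (j 0) (Z (j 0)) < (1 / (α + 1)) * v (j 0) (X (j 0)))
    (hb : ∀ s, 1 ≤ s → s ≤ ℓ - 2 → v (j s) (Z (j (s - 1))) > v (j s) (Z (j s)))
    (hc1 : Z (j (ℓ - 1)) = X (j (ℓ - 1)))
    (hc2 : v (j (ℓ - 1)) (Z (j (ℓ - 2))) > (1 / α) * v (j (ℓ - 1)) (Z (j (ℓ - 1)))) :
    False := by
  classical
  obtain ⟨k, rfl⟩ : ∃ k, ℓ = k + 2 := ⟨ℓ - 2, by omega⟩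
  have hc1' : Z (j (k + 1)) = X (j (k + 1)) := hc1
  have hc2' : v (j (k + 1)) (Z (j k)) > (1 / α) * v (j (k + 1)) (Z (j (k + 1))) := hc2
  -- basic value facts
  have vnn : ∀ i S, 0 ≤ v i S := fun i S => by
    rw [hadd]; exact Finset.sum_nonneg fun g _ => hnn i g
  have vsdiff : ∀ i (S T : Finset (Fin m)), T ⊆ S → v i (S \ T) = v i S - v i T := by
    intro i S T h
    rw [hadd i (S \ T), hadd i S, hadd i T, ← Finset.sum_sdiff h]; ring
  have vunion : ∀ i (S T : Finset (Fin m)), Disjoint S T →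
      v i (S ∪ T) = v i S + v i T := by
    intro i S T h
    rw [hadd i (S ∪ T), hadd i S, hadd i T, Finset.sum_union h]
  have hjne : ∀ s t, s < k + 2 → t < k + 2 → s ≠ t → j s ≠ j t := by
    intro s t hs ht hst e; exact hst (hjinj s hs t ht e)
  have hZX : ∀ s t, s < k + 2 → t < k + 2 → s ≠ t → Disjoint (Z (j s)) (X (j t)) := by
    intro s t hs ht hst
    exact (hdisj (j s) (j t) (hjne s t hs ht hst)).mono_left (hZ (j s))
  -- unique witness in Z's
  have huniq : ∀ g s t, s < k + 2 → t < k + 2 → g ∈ Z (j s) → g ∈ Z (j t) → s = t := by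
    intro g s t hs ht hgs hgt
    by_contra hne
    exact Finset.disjoint_left.mp (hZX s t hs ht hne) hgs (hZ (j t) hgt)
  -- owner function
  have hown : ∀ g : Fin m, ∃ i, g ∈ X i := by
    intro g
    have : g ∈ Finset.univ.biUnion X := by rw [hcomplete]; exact Finset.mem_univ g
    simpa using this
  set o : Fin m → Fin n := fun g => Classical.choose (hown g) with ho
  have hoX : ∀ g, g ∈ X (o g) := fun g => Classical.choose_spec (hown g)
  have howner : ∀ g i, g ∈ X i → o g = i := by
    intro g i hg
    by_contra hne
    exact Finset.disjoint_left.mp (hdisj (o g) i hne) (hoX g) hg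
  -- the reallocation function
  set f : Fin m → Fin n := fun g =>
    if h : ∃ s, s < k + 1 ∧ g ∈ Z (j s) then j (Nat.find h + 1) else o g with hfdef
  have hf1 : ∀ s, s < k + 1 → ∀ g, g ∈ Z (j s) → f g = j (s + 1) := by
    intro s hs g hg
    have hex : ∃ t, t < k + 1 ∧ g ∈ Z (j t) := ⟨s, hs, hg⟩
    have h1 : f g = j (Nat.find hex + 1) := by
      simp only [hfdef]; rw [dif_pos hex]
    have h2 := Nat.find_spec hex
    have h3 : Nat.find hex = s :=
      huniq g _ s (by omega) (by omega) h2.2 hg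
    rw [h1, h3]
  have hfneg : ∀ g, (¬ ∃ s, s < k + 1 ∧ g ∈ Z (j s)) → f g = o g := by
    intro g hg
    simp only [hfdef]; rw [dif_neg hg]
  have hfX : ∀ g i, g ∈ X i → (∀ s, s < k + 1 → g ∉ Z (j s)) → f g = i := by
    intro g i hg hn'
    rw [hfneg g (by push_neg; exact fun s hs => hn' s hs)]
    exact howner g i hg
  -- the new allocation
  set Y : Fin n → Finset (Fin m) := fun i => Finset.univ.filter (fun g => f g = i)
    with hYdef
  have hYmem : ∀ g i, g ∈ Y i ↔ f g = i := by
    intro g i; simp [hYdef]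
  have hYdisj : ∀ i i', i ≠ i' → Disjoint (Y i) (Y i') := by
    intro i i' hne
    rw [Finset.disjoint_left]
    intro g hg hg'
    rw [hYmem] at hg hg'
    exact hne (hg ▸ hg')
  -- set identities
  have hY0 : Y (j 0) = X (j 0) \ Z (j 0) := by
    ext g
    rw [hYmem, Finset.mem_sdiff]
    constructor
    · intro hfg
      by_cases hex : ∃ s, s < k + 1 ∧ g ∈ Z (j s)
      · obtain ⟨s, hs, hgs⟩ := hex
        rw [hf1 s hs g hgs] at hfg
        have := hjinj (s + 1) (by omega) 0 (by omega) hfg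
        omega
      · rw [hfneg g hex] at hfg
        refine ⟨hfg ▸ hoX g, fun hgZ => hex ⟨0, by omega, hgZ⟩⟩
    · rintro ⟨hgX, hgZ⟩
      refine hfX g (j 0) hgX (fun s hs hgs => ?_)
      rcases Nat.eq_zero_or_pos s with rfl | hs0
      · exact hgZ hgs
      · exact Finset.disjoint_left.mp
          (hZX s 0 (by omega) (by omega) (by omega)) hgs hgX
  have hYmid : ∀ s, s < k →
      Y (j (s + 1)) = (X (j (s + 1)) \ Z (j (s + 1))) ∪ Z (j s) := by
    intro s hs
    ext g
    rw [hYmem, Finset.mem_union, Finset.mem_sdiff]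
    constructor
    · intro hfg
      by_cases hex : ∃ t, t < k + 1 ∧ g ∈ Z (j t)
      · obtain ⟨t, ht, hgt⟩ := hex
        rw [hf1 t ht g hgt] at hfg
        have := hjinj (t + 1) (by omega) (s + 1) (by omega) hfg
        right
        have : t = s := by omega
        rwa [← this]
      · rw [hfneg g hex] at hfg
        left
        exact ⟨hfg ▸ hoX g, fun hgZ => hex ⟨s + 1, by omega, hgZ⟩⟩
    · rintro (⟨hgX, hgZ⟩ | hgZ)
      · refine hfX g (j (s + 1)) hgX (fun t ht hgt => ?_)
        rcases eq_or_ne t (s + 1) with rfl | hne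
        · exact hgZ hgt
        · exact Finset.disjoint_left.mp
            (hZX t (s + 1) (by omega) (by omega) hne) hgt hgX
      · exact hf1 s (by omega) g hgZ
  have hYlast : Y (j (k + 1)) = X (j (k + 1)) ∪ Z (j k) := by
    ext g
    rw [hYmem, Finset.mem_union]
    constructor
    · intro hfg
      by_cases hex : ∃ t, t < k + 1 ∧ g ∈ Z (j t)
      · obtain ⟨t, ht, hgt⟩ := hex
        rw [hf1 t ht g hgt] at hfg
        have := hjinj (t + 1) (by omega) (k + 1) (by omega) hfg
        right
        have : t = k := by omega
        rwa [← this]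
      · rw [hfneg g hex] at hfg
        left; exact hfg ▸ hoX g
    · rintro (hgX | hgZ)
      · refine hfX g (j (k + 1)) hgX (fun t ht hgt => ?_)
        exact Finset.disjoint_left.mp
          (hZX t (k + 1) (by omega) (by omega) (by omega)) hgt hgX
      · exact hf1 k (by omega) g hgZ
  have hYother : ∀ i, (∀ s, s < k + 2 → j s ≠ i) → Y i = X i := by
    intro i hi
    ext g
    rw [hYmem]
    constructor
    · intro hfg
      by_cases hex : ∃ t, t < k + 1 ∧ g ∈ Z (j t)
      · obtain ⟨t, ht, hgt⟩ := hex
        rw [hf1 t ht g hgt] at hfg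
        exact absurd hfg (hi (t + 1) (by omega))
      · rw [hfneg g hex] at hfg
        exact hfg ▸ hoX g
    · intro hgX
      refine hfX g i hgX (fun t ht hgt => ?_)
      have : j t ≠ i := hi t (by omega)
      exact Finset.disjoint_left.mp
        ((hdisj (j t) i this).mono_left (hZ (j t))) hgt hgX
  -- value bounds on the chain
  have hv0 : (α / (α + 1)) * v (j 0) (X (j 0)) < v (j 0) (Y (j 0)) := by
    rw [hY0, vsdiff _ _ _ (hZ (j 0))]
    have hB := hpos (j 0)
    have hne : α + 1 ≠ 0 := by positivity
    have hkey : α / (α + 1) * v (j 0) (X (j 0))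
        = v (j 0) (X (j 0)) - 1 / (α + 1) * v (j 0) (X (j 0)) := by
      field_simp; ring
    linarith [ha, hkey]
  have hvmid : ∀ s, s < k →
      v (j (s + 1)) (X (j (s + 1))) ≤ v (j (s + 1)) (Y (j (s + 1))) := by
    intro s hs
    have hdj : Disjoint (X (j (s + 1)) \ Z (j (s + 1))) (Z (j s)) :=
      ((hdisj (j (s + 1)) (j s) (hjne _ _ (by omega) (by omega) (by omega))).mono
        Finset.sdiff_subset (hZ (j s))).symm.symm
    rw [hYmid s hs, vunion _ _ _ hdj, vsdiff _ _ _ (hZ (j (s + 1)))]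
    have := hb (s + 1) (by omega) (by omega)
    simp only [Nat.add_sub_cancel] at this
    linarith
  have hvlast : ((α + 1) / α) * v (j (k + 1)) (X (j (k + 1))) < v (j (k + 1)) (Y (j (k + 1))) := by
    have hdj : Disjoint (X (j (k + 1))) (Z (j k)) :=
      ((hdisj (j (k + 1)) (j k) (hjne _ _ (by omega) (by omega) (by omega))).mono_right
        (hZ (j k)))
    rw [hYlast, vunion _ _ _ hdj]
    have hB := hpos (j (k + 1))
    rw [hc1'] at hc2'
    have hne : α ≠ 0 := ne_of_gt hα0
    have hkey : (α + 1) / α * v (j (k + 1)) (X (j (k + 1)))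
        = v (j (k + 1)) (X (j (k + 1))) + 1 / α * v (j (k + 1)) (X (j (k + 1))) := by
      field_simp
    linarith [hc2', hkey]
  -- product over the chain
  set A : ℕ → ℝ := fun s => v (j s) (Y (j s)) with hA
  set B : ℕ → ℝ := fun s => v (j s) (X (j s)) with hB
  have hBpos : ∀ s, 0 < B s := fun s => hpos (j s)
  have hAsplit : ∏ s ∈ Finset.range (k + 2), A s
      = ((∏ s ∈ Finset.range k, A (s + 1)) * A 0) * A (k + 1) := by
    rw [Finset.prod_range_succ, Finset.prod_range_succ']
  have hBsplit : ∏ s ∈ Finset.range (k + 2), B s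
      = ((∏ s ∈ Finset.range k, B (s + 1)) * B 0) * B (k + 1) := by
    rw [Finset.prod_range_succ, Finset.prod_range_succ']
  have hmidle : ∏ s ∈ Finset.range k, B (s + 1) ≤ ∏ s ∈ Finset.range k, A (s + 1) := by
    refine Finset.prod_le_prod (fun s _ => (hBpos (s + 1)).le) (fun s hs => ?_)
    exact hvmid s (Finset.mem_range.mp hs)
  have hmidpos : 0 < ∏ s ∈ Finset.range k, B (s + 1) :=
    Finset.prod_pos fun s _ => hBpos (s + 1)
  have hchain : ∏ s ∈ Finset.range (k + 2), B s < ∏ s ∈ Finset.range (k + 2), A s := by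
    rw [hAsplit, hBsplit]
    have hα1' : (0:ℝ) < α + 1 := by linarith
    have h0 : (0:ℝ) < (α / (α + 1)) * B 0 := mul_pos (by positivity) (hBpos 0)
    have hl : (0:ℝ) < ((α + 1) / α) * B (k + 1) := mul_pos (by positivity) (hBpos (k + 1))
    calc ((∏ s ∈ Finset.range k, B (s + 1)) * B 0) * B (k + 1)
        = ((∏ s ∈ Finset.range k, B (s + 1)) * ((α / (α + 1)) * B 0))
            * (((α + 1) / α) * B (k + 1)) := by
          field_simp
      _ < ((∏ s ∈ Finset.range k, A (s + 1)) * A 0) * A (k + 1) := by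
          apply mul_lt_mul''
          · exact mul_lt_mul' hmidle hv0 h0.le (lt_of_lt_of_le hmidpos hmidle)
          · exact hvlast
          · exact (mul_pos hmidpos h0).le
          · exact hl.le
  -- compare full products
  set T : Finset (Fin n) := (Finset.range (k + 2)).image j with hT
  have hprodT : ∀ G : ℕ → ℝ, (∀ s, s < k + 2 → True) →
      True := fun _ _ => trivial
  have himgA : ∏ i ∈ T, v i (Y i) = ∏ s ∈ Finset.range (k + 2), A s := by
    rw [hT]
    exact Finset.prod_image (fun s hs t ht e =>
      hjinj s (Finset.mem_range.mp hs) t (Finset.mem_range.mp ht) e)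
  have himgB : ∏ i ∈ T, v i (X i) = ∏ s ∈ Finset.range (k + 2), B s := by
    rw [hT]
    exact Finset.prod_image (fun s hs t ht e =>
      hjinj s (Finset.mem_range.mp hs) t (Finset.mem_range.mp ht) e)
  have hcomplY : ∀ i ∈ Tᶜ, v i (Y i) = v i (X i) := by
    intro i hi
    rw [Finset.mem_compl, hT, Finset.mem_image] at hi
    push_neg at hi
    rw [hYother i (fun s hs => hi s (Finset.mem_range.mpr hs))]
  have hcpos : 0 < ∏ i ∈ Tᶜ, v i (X i) :=
    Finset.prod_pos fun i _ => hpos i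
  have hfull : ∏ i, v i (X i) < ∏ i, v i (Y i) := by
    rw [← Finset.prod_mul_prod_compl T (fun i => v i (Y i)),
        ← Finset.prod_mul_prod_compl T (fun i => v i (X i)),
        Finset.prod_congr rfl hcomplY, himgA, himgB]
    exact mul_lt_mul_of_pos_right hchain hcpos
  -- contradiction with maximality
  have hn : 0 < n := (j 0).pos
  have h1n : (0:ℝ) < 1 / (n : ℝ) := by positivity
  have hPX : (0:ℝ) ≤ ∏ i, v i (X i) :=
    (Finset.prod_pos fun i _ => hpos i).le
  have := hmax Y hYdisj
  have hlt := Real.rpow_lt_rpow hPX hfull h1n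
  linarith
end

section
/- Let v be a subadditive monotone valuation, X a bundle, Z ⊆ X a sub-bundle with v(X \ Z) ≤ (α/(α+1))·v(X) and v(Z) ≥ (1/(α+1))·v(X), let g ∈ Z be an item with v({g}) < (α/(α+1))·v(X), and let Z' ⊆ (X \ Z) ∪ {g}. If α ≤ 1/2, then v(Z') ≤ v(Z). -/
open Finset

/-- Key step of `z_incr`: for a monotone subadditive valuation `v`, `Z ⊆ X` with
`v(X \ Z) ≤ (α/(α+1))·v(X)` and `v(Z) ≥ (1/(α+1))·v(X)`, an item `g ∈ Z` with
`v({g}) < (α/(α+1))·v(X)`, and `Z' ⊆ (X \ Z) ∪ {g}`: if `α ≤ 1/2`, then `v(Z') ≤ v(Z)`. -/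
theorem stmt_12 {ι : Type*} [DecidableEq ι]
    (v : Finset ι → ℝ)
    (hmono : ∀ S T : Finset ι, S ⊆ T → v S ≤ v T)
    (hsub : ∀ S T : Finset ι, v (S ∪ T) ≤ v S + v T)
    (hnn : ∀ S : Finset ι, 0 ≤ v S)
    (α : ℝ) (hα0 : 0 ≤ α) (hα1 : α ≤ 1 / 2)
    (X Z Z' : Finset ι) (hZX : Z ⊆ X)
    (hred : v (X \ Z) ≤ (α / (α + 1)) * v X)
    (hZbig : v Z ≥ (1 / (α + 1)) * v X)
    (g : ι) (hg : g ∈ Z) (hgsmall : v {g} < (α / (α + 1)) * v X)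
    (hZ' : Z' ⊆ (X \ Z) ∪ {g}) :
    v Z' ≤ v Z := by
  have h1 : v Z' ≤ v ((X \ Z) ∪ {g}) := hmono _ _ hZ'
  have h2 := hsub (X \ Z) {g}
  have hX : 0 ≤ v X := hnn X
  have hpos : 0 < α + 1 := by linarith
  have hkey : (α / (α + 1)) * v X + (α / (α + 1)) * v X ≤ (1 / (α + 1)) * v X := by
    rw [div_mul_eq_mul_div, ← add_div, div_mul_eq_mul_div, div_le_div_iff₀ hpos hpos]
    nlinarith [mul_nonneg hX hα0, mul_nonneg (mul_nonneg hX hα0) hα0]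
  linarith
end

section
/- Suppose at termination of the subadditive algorithm the n agents are partitioned into ℓ chains and the remaining agents in cycles, such that: for each chain's head agent i we have v_i(M_i) ≥ (1/α)·v_i(X_i); for each cycle agent and non-head chain agent i we have v_i(M_i) ≥ (1/(α+1))·v_i(X_i). Then ∏_i v_i(M_i) ≥ (1/(α+1))^n · ((α+1)/α)^ℓ · ∏_i v_i(X_i); in particular, if moreover ((α+1)/α)^ℓ · ∏_i v_i(X_i) ≥ ∏_i v_i(X_i^0) for the initial bundles X^0, then NW(M) ≥ (1/(α+1))·NW(X^0). -/
open Finset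

theorem Finset.pow_mul_pow_mul_prod_le_prod {ι R : Type*} [Fintype ι] [CommSemiring R]
    [PartialOrder R] [IsOrderedRing R] (H : Finset ι)
    {a b : R} (ha : 0 ≤ a) (hb : 0 ≤ b) {f g : ι → R} (hg : ∀ i, 0 ≤ g i)
    (hH : ∀ i ∈ H, b * a * g i ≤ f i) (hHc : ∀ i ∉ H, b * g i ≤ f i) :
    b ^ Fintype.card ι * a ^ H.card * ∏ i, g i ≤ ∏ i, f i := by
  classical
  have hweight : ∀ i, 0 ≤ b * (if i ∈ H then a else 1) * g i := fun i => by
    split_ifs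
    exacts [mul_nonneg (mul_nonneg hb ha) (hg i), mul_nonneg (mul_nonneg hb zero_le_one) (hg i)]
  calc b ^ Fintype.card ι * a ^ H.card * ∏ i, g i
      = ∏ i, b * (if i ∈ H then a else 1) * g i := by
        rw [prod_mul_distrib, prod_mul_distrib, prod_const, card_univ, prod_ite_mem,
          univ_inter, prod_const]
    _ ≤ ∏ i, f i := prod_le_prod (fun i _ => hweight i) fun i _ => by
        by_cases hi : i ∈ H
        · simpa [hi] using hH i hi
        · simpa [hi] using hHc i hi

theorem Real.mul_rpow_one_div_le_of_pow_mul_le {c x y : ℝ} {n : ℕ} (hn : n ≠ 0)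
    (hc : 0 ≤ c) (hx : 0 ≤ x) (h : c ^ n * x ≤ y) :
    c * x ^ ((1 : ℝ) / n) ≤ y ^ ((1 : ℝ) / n) := by
  have hroot : (c ^ n) ^ ((1 : ℝ) / n) = c := by
    rw [← Real.rpow_natCast, ← Real.rpow_mul hc, mul_one_div_cancel (by exact_mod_cast hn),
      Real.rpow_one]
  calc c * x ^ ((1 : ℝ) / n) = (c ^ n * x) ^ ((1 : ℝ) / n) := by
        rw [Real.mul_rpow (by positivity) hx, hroot]
    _ ≤ y ^ ((1 : ℝ) / n) := Real.rpow_le_rpow (by positivity) h (by positivity)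

theorem stmt_16_general (n m : ℕ) (hn : 0 < n) (α : ℝ) (hα0 : 0 < α)
    (v : Fin n → Finset (Fin m) → ℝ)
    (M X X0 : Fin n → Finset (Fin m))
    (hposX : ∀ i, 0 < v i (X i))
    (hposX0 : ∀ i, 0 < v i (X0 i))
    (H : Finset (Fin n)) (ℓ : ℕ) (hcard : H.card = ℓ)
    (hhead : ∀ i ∈ H, v i (M i) ≥ (1 / α) * v i (X i))
    (hrest : ∀ i ∉ H, v i (M i) ≥ (1 / (α + 1)) * v i (X i)) :
    (∏ i, v i (M i)) ≥ (1 / (α + 1)) ^ n * ((α + 1) / α) ^ ℓ * ∏ i, v i (X i) ∧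
    (((α + 1) / α) ^ ℓ * (∏ i, v i (X i)) ≥ (∏ i, v i (X0 i)) →
      (∏ i, v i (M i)) ^ ((1 : ℝ) / (n : ℝ)) ≥
        (1 / (α + 1)) * (∏ i, v i (X0 i)) ^ ((1 : ℝ) / (n : ℝ))) := by
  have hhead_factor : 1 / (α + 1) * ((α + 1) / α) = 1 / α := by field_simp
  have hM : (1 / (α + 1)) ^ n * ((α + 1) / α) ^ ℓ * ∏ i, v i (X i) ≤ ∏ i, v i (M i) := by
    simpa [hcard] using Finset.pow_mul_pow_mul_prod_le_prod H (by positivity) (by positivity)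
      (fun i => (hposX i).le) (fun i hi => hhead_factor ▸ hhead i hi) hrest
  refine ⟨hM, fun hX0 => ?_⟩
  refine Real.mul_rpow_one_div_le_of_pow_mul_le hn.ne' (by positivity)
    (prod_nonneg fun i _ => (hposX0 i).le) (le_trans ?_ hM)
  rw [mul_assoc]
  exact mul_le_mul_of_nonneg_left hX0 (by positivity)

/-- Final aggregation for the subadditive Nash welfare bound: if the `ℓ` chain-head
agents `i ∈ H` satisfy `v_i(M_i) ≥ (1/α)·v_i(X_i)` and all other agents satisfy
`v_i(M_i) ≥ (1/(α+1))·v_i(X_i)`, then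
`∏ᵢ v_i(M_i) ≥ (1/(α+1))^n · ((α+1)/α)^ℓ · ∏ᵢ v_i(X_i)`; and if moreover
`((α+1)/α)^ℓ · ∏ᵢ v_i(X_i) ≥ ∏ᵢ v_i(X⁰_i)`, then `NW(M) ≥ (1/(α+1))·NW(X⁰)`. -/
theorem stmt_16 (n m : ℕ) (hn : 0 < n) (α : ℝ) (hα0 : 0 < α) (hα1 : α ≤ 1 / 2)
    (v : Fin n → Finset (Fin m) → ℝ)
    (M X X0 : Fin n → Finset (Fin m))
    (hposM : ∀ i, 0 < v i (M i)) (hposX : ∀ i, 0 < v i (X i))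
    (hposX0 : ∀ i, 0 < v i (X0 i))
    (H : Finset (Fin n)) (ℓ : ℕ) (hcard : H.card = ℓ)
    (hhead : ∀ i ∈ H, v i (M i) ≥ (1 / α) * v i (X i))
    (hrest : ∀ i ∉ H, v i (M i) ≥ (1 / (α + 1)) * v i (X i)) :
    (∏ i, v i (M i)) ≥ (1 / (α + 1)) ^ n * ((α + 1) / α) ^ ℓ * ∏ i, v i (X i) ∧
    (((α + 1) / α) ^ ℓ * (∏ i, v i (X i)) ≥ (∏ i, v i (X0 i)) →
      (∏ i, v i (M i)) ^ ((1 : ℝ) / (n : ℝ)) ≥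
        (1 / (α + 1)) * (∏ i, v i (X0 i)) ^ ((1 : ℝ) / (n : ℝ))) :=
  stmt_16_general n m hn α hα0 v M X X0 hposX hposX0 H ℓ hcard hhead hrest
end

section
/- For any real α > 0 and integer n ≥ 2: 1 - (1/(α+1))^{n/(n-1)} ≥ (α/(α+1))·(1 + (1/(α+1))·(1/(n-1))). -/
/-- For real `α > 0` and integer `n ≥ 2`:
`1 - (1/(α+1))^(n/(n-1)) ≥ (α/(α+1))·(1 + (1/(α+1))·(1/(n-1)))`. -/
theorem stmt_18 (α : ℝ) (hα : 0 < α) (n : ℕ) (hn : 2 ≤ n) :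
    1 - (1 / (α + 1)) ^ ((n : ℝ) / ((n : ℝ) - 1)) ≥
      (α / (α + 1)) * (1 + (1 / (α + 1)) * (1 / ((n : ℝ) - 1))) := by
  have hn1 : (1 : ℝ) ≤ (n : ℝ) := by exact_mod_cast Nat.one_le_of_lt hn
  have hn2 : (2 : ℝ) ≤ (n : ℝ) := by exact_mod_cast hn
  have hm : (0 : ℝ) < (n : ℝ) - 1 := by linarith
  set β : ℝ := 1 / (α + 1) with hβdef
  have ha1 : (0 : ℝ) < α + 1 := by linarith
  have hβpos : 0 < β := by positivity
  have hβlt : β < 1 := by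
    rw [hβdef, div_lt_one ha1]; linarith
  set p : ℝ := 1 / ((n : ℝ) - 1) with hpdef
  have hp0 : 0 ≤ p := by positivity
  have hp1 : p ≤ 1 := by
    rw [hpdef, div_le_one hm]; linarith
  have hexp : (n : ℝ) / ((n : ℝ) - 1) = 1 + p := by
    rw [hpdef]; field_simp; ring
  have hsplit : β ^ ((n : ℝ) / ((n : ℝ) - 1)) = β * β ^ p := by
    rw [hexp, Real.rpow_add hβpos, Real.rpow_one]
  have hber : β ^ p ≤ 1 + p * (β - 1) := by
    have := rpow_one_add_le_one_add_mul_self (s := β - 1)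
      (by linarith) hp0 hp1
    simpa using this
  have hαβ : α / (α + 1) = 1 - β := by
    rw [hβdef]; field_simp; ring
  rw [hsplit, hαβ, ge_iff_le]
  nlinarith [mul_le_mul_of_nonneg_left hber hβpos.le]
end
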